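/- For all v₁, v₂ ∈ ℝᵐ it holds that ‖v₁ − v₂‖² ≤ h(v₁, v₂) ≤ q(‖v₁ − v₂‖), where h(u,v) := ⟨eᵘ, e^{−v}⟩ + ⟨e^{−u}, eᵛ⟩ − 2m, q(t) := 2(cosh(t) − 1), and ‖·‖ is the Euclidean norm. -/

import Mathlib

/-!
Coordinatewise, `h(v₁, v₂) = ∑ᵢ q(dᵢ)` with `d = v₁ − v₂`. The lower bound is `q(t) ≥ t²`, the
first term of the Taylor series of `q`. For the upper bound, `s ↦ q(√s)` is a power series in `s`
with nonnegative coefficients and no constant term, hence superadditive on `[0, ∞)`, and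
`∑ᵢ q(√(dᵢ²)) ≤ q(√(∑ᵢ dᵢ²))`.
-/

/-- The divergence `h(u,v) := ⟨eᵘ, e^{−v}⟩ + ⟨e^{−u}, eᵛ⟩ − 2m`. -/
noncomputable def diverg {m : ℕ} (u v : Fin m → ℝ) : ℝ :=
  (∑ i, Real.exp (u i) * Real.exp (-v i)) + (∑ i, Real.exp (-u i) * Real.exp (v i))
    - 2 * m

/-- The Euclidean norm of a vector in `ℝᵐ`. -/
noncomputable def enormR {m : ℕ} (d : Fin m → ℝ) : ℝ := Real.sqrt (∑ i, d i ^ 2)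

open Finset Real

lemma Finset.sum_pow_le_pow_sum_of_nonneg {ι R : Type*} [CommSemiring R] [PartialOrder R]
    [IsOrderedRing R] {s : Finset ι} {f : ι → R} (hf : ∀ i ∈ s, 0 ≤ f i) {n : ℕ} (hn : n ≠ 0) :
    ∑ i ∈ s, f i ^ n ≤ (∑ i ∈ s, f i) ^ n := by
  classical
  induction s using Finset.induction_on with
  | empty => simp [zero_pow hn]
  | insert a s ha ih =>
    rw [sum_insert ha, sum_insert ha]
    have hfs : ∀ i ∈ s, 0 ≤ f i := fun i hi => hf i (mem_insert_of_mem hi)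
    calc f a ^ n + ∑ i ∈ s, f i ^ n ≤ f a ^ n + (∑ i ∈ s, f i) ^ n := by gcongr; exact ih hfs
      _ ≤ (f a + ∑ i ∈ s, f i) ^ n :=
        pow_add_pow_le (hf a (mem_insert_self a s)) (sum_nonneg hfs) hn

lemma Real.hasSum_cosh_sqrt_sub_one {s : ℝ} (hs : 0 ≤ s) :
    HasSum (fun n => s ^ (n + 1) / (2 * (n + 1)).factorial) (cosh √s - 1) := by
  have h := (hasSum_nat_add_iff' 1).2 (hasSum_cosh √s)
  simpa only [mul_zero, pow_zero, Nat.factorial_zero, Nat.cast_one, div_one, range_one,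
    sum_singleton, pow_mul, sq_sqrt hs] using h

lemma Real.sq_le_two_mul_cosh_sub_one (t : ℝ) : t ^ 2 ≤ 2 * (cosh t - 1) := by
  have h := le_hasSum (hasSum_cosh_sqrt_sub_one (sq_nonneg t)) 0 fun n _ => by positivity
  rw [sqrt_sq_eq_abs, cosh_abs] at h
  norm_num at h
  linarith

lemma Real.sum_cosh_sqrt_sub_one_le {ι : Type*} (s : Finset ι) {a : ι → ℝ}
    (ha : ∀ i ∈ s, 0 ≤ a i) :
    ∑ i ∈ s, (cosh √(a i) - 1) ≤ cosh √(∑ i ∈ s, a i) - 1 := by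
  refine hasSum_le (fun n => ?_) (hasSum_sum fun i hi => hasSum_cosh_sqrt_sub_one (ha i hi))
    (hasSum_cosh_sqrt_sub_one (sum_nonneg ha))
  rw [← sum_div]
  gcongr
  exact sum_pow_le_pow_sum_of_nonneg ha n.succ_ne_zero

lemma diverg_eq_sum_cosh {m : ℕ} (u v : Fin m → ℝ) :
    diverg u v = ∑ i, 2 * (cosh (u i - v i) - 1) := by
  have hterm : ∀ i, 2 * (cosh (u i - v i) - 1)
      = exp (u i) * exp (-v i) + exp (-u i) * exp (v i) - 2 := fun i => by
    rw [cosh_eq, ← exp_add, ← exp_add]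
    ring_nf
  simp only [hterm, sum_sub_distrib, sum_add_distrib, sum_const, card_univ, Fintype.card_fin,
    nsmul_eq_mul, diverg]
  ring

/-- for all `v₁, v₂ ∈ ℝᵐ`,
`‖v₁ − v₂‖² ≤ h(v₁, v₂) ≤ q(‖v₁ − v₂‖)` with `q(t) := 2(cosh(t) − 1)`
(Euclidean norm). -/
theorem stmt_13 {m : ℕ} (v₁ v₂ : Fin m → ℝ) :
    enormR (v₁ - v₂) ^ 2 ≤ diverg v₁ v₂ ∧
    diverg v₁ v₂ ≤ 2 * (Real.cosh (enormR (v₁ - v₂)) - 1) := by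
  have hsq : ∀ i, 0 ≤ (v₁ - v₂) i ^ 2 := fun i => sq_nonneg _
  rw [diverg_eq_sum_cosh, enormR]
  constructor
  · rw [sq_sqrt (sum_nonneg fun i _ => hsq i)]
    exact sum_le_sum fun i _ => sq_le_two_mul_cosh_sub_one _
  · rw [← mul_sum]
    gcongr
    calc ∑ i, (cosh (v₁ i - v₂ i) - 1) = ∑ i, (cosh √((v₁ - v₂) i ^ 2) - 1) := by
          simp [sqrt_sq_eq_abs, cosh_abs]
      _ ≤ _ := sum_cosh_sqrt_sub_one_le _ fun i _ => hsq i
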